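/- Let α be a positive integer, 0 < p = 1 - q < 1, and z > 1. Then h₁(1) = ∑_{j=1}^{α} [(α-1)!/((α-j)! j!)]·(p/q)^{j-1}·(j-z)^+ ≤ (α-1) p q^{1-α} / z, and h₂(1) = ∑_{j=1}^{α} [(α-1)!/((α-j)! j!)]·(p/q)^{j-1}·E[(B_{α,p}-z)^+] ≤ (α-1) p q^{1-α} / z. -/

import Mathlib

open Finset

/-- `E[(B_{α,p} - z)^+]`, the expected call function of a binomial random variable
`B_{α,p}` with `P(B = j) = C(α,j) p^j (1-p)^{α-j}` for `j = 0,…,α`. -/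
noncomputable def binomCallExp (α : ℕ) (p z : ℝ) : ℝ :=
  ∑ j ∈ Finset.range (α + 1),
    (α.choose j : ℝ) * p ^ j * (1 - p) ^ (α - j) * max ((j : ℝ) - z) 0

/-- `h₁(k) = ∑_{j=k}^{α} [(α-k)!/(α-j)!]·[(k-1)!/j!]·(p/q)^{j-k}·(j-z)^+` with `q = 1 - p`. -/
noncomputable def h1 (α : ℕ) (p z : ℝ) (k : ℕ) : ℝ :=
  ∑ j ∈ Finset.Icc k α,
    ((α - k).factorial : ℝ) / ((α - j).factorial : ℝ) *
      (((k - 1).factorial : ℝ) / (j.factorial : ℝ)) *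
        (p / (1 - p)) ^ (j - k) * max ((j : ℝ) - z) 0

/-- `h₂(k) = ∑_{j=k}^{α} [(α-k)!/(α-j)!]·[(k-1)!/j!]·(p/q)^{j-k}·E[(B_{α,p}-z)^+]`
with `q = 1 - p`. -/
noncomputable def h2 (α : ℕ) (p z : ℝ) (k : ℕ) : ℝ :=
  ∑ j ∈ Finset.Icc k α,
    ((α - k).factorial : ℝ) / ((α - j).factorial : ℝ) *
      (((k - 1).factorial : ℝ) / (j.factorial : ℝ)) *
        (p / (1 - p)) ^ (j - k) * binomCallExp α p z

/-- The solution `g_z` of the binomial Stein equation: `g_z(0) = 0`,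
`g_z(k) = -∑_{j=k}^{α} [(α-k)!/(α-j)!]·[(k-1)!/j!]·(p/q)^{j-k}·[(j-z)^+ - E(B_{α,p}-z)^+]`
for `1 ≤ k ≤ α`, extended by `g_z(k) = 0` for `k > α` (in particular `g_z(α+1) = 0`). -/
noncomputable def steinSol (α : ℕ) (p z : ℝ) (k : ℕ) : ℝ :=
  if k = 0 ∨ α < k then 0
  else
    -∑ j ∈ Finset.Icc k α,
      ((α - k).factorial : ℝ) / ((α - j).factorial : ℝ) *
        (((k - 1).factorial : ℝ) / (j.factorial : ℝ)) *
          (p / (1 - p)) ^ (j - k) * (max ((j : ℝ) - z) 0 - binomCallExp α p z)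

/-! For `1 ≤ j ≤ α` the `k = 1` coefficients are rescaled binomial probabilities:
`α p q^(α-1) · (α-1)!/((α-j)! j!) · (p/q)^(j-1) = C(α,j) p^j q^(α-j)`. Hence
`α p q^(α-1) h₁(1) = E(B-z)^+` and `α p q^(α-1) h₂(1) = (1 - q^α) E(B-z)^+ ≤ E(B-z)^+`.
Finally `(j-z)^+ ≤ j(j-1)/z` for `z ≥ 1`, so `E(B-z)^+ ≤ E[B(B-1)]/z = α(α-1)p²/z`. -/

theorem sum_range_add_one_eq_add_sum_Icc {M : Type*} [AddCommMonoid M] (f : ℕ → M) (n : ℕ) :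
    ∑ j ∈ range (n + 1), f j = f 0 + ∑ j ∈ Icc 1 n, f j := by
  rw [Nat.range_succ_eq_Icc_zero, ← Finset.insert_Icc_add_one_left_eq_Icc n.zero_le,
    sum_insert (by simp), zero_add]

theorem sum_choose_mul_pow_Icc (n : ℕ) (p : ℝ) :
    ∑ j ∈ Icc 1 n, (n.choose j : ℝ) * p ^ j * (1 - p) ^ (n - j) = 1 - (1 - p) ^ n := by
  have h := (add_pow p (1 - p) n).symm
  rw [add_sub_cancel, one_pow, sum_range_add_one_eq_add_sum_Icc] at h
  simp only [pow_zero, one_mul, Nat.sub_zero, Nat.choose_zero_right, Nat.cast_one, mul_one] at h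
  refine eq_sub_of_add_eq' (Eq.trans ?_ h)
  congr 1
  exact sum_congr rfl fun j _ => by ring

theorem sum_choose_mul_pow_mul_mul_sub_one (n : ℕ) (p : ℝ) :
    ∑ j ∈ range (n + 1), (n.choose j : ℝ) * p ^ j * (1 - p) ^ (n - j) * ((j : ℝ) * (j - 1))
      = n * (n - 1) * p ^ 2 := by
  have h := congrArg (Polynomial.eval p) (bernsteinPolynomial.sum_mul_smul ℝ n)
  simp only [Polynomial.eval_finsetSum, bernsteinPolynomial,
    Polynomial.eval_mul, Polynomial.eval_pow, Polynomial.eval_X, Polynomial.eval_sub,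
    Polynomial.eval_one, Polynomial.eval_natCast, nsmul_eq_mul] at h
  have hcast (m : ℕ) : ((m * (m - 1) : ℕ) : ℝ) = m * (m - 1) := by
    rcases m with _ | m <;> simp -- the truncated `0 - 1` is multiplied by `0`
  simp only [hcast] at h
  rw [← h]
  exact sum_congr rfl fun j _ => by ring

theorem max_sub_zero_le_mul_sub_one_div {z : ℝ} (hz : 1 ≤ z) (j : ℕ) :
    max ((j : ℝ) - z) 0 ≤ j * (j - 1) / z := by
  have hz0 : 0 < z := by linarith
  have hj : 0 ≤ (j : ℝ) * (j - 1) := by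
    rcases j with _ | j
    · simp
    · push_cast; nlinarith
  refine max_le ?_ (div_nonneg hj hz0.le)
  rw [le_div_iff₀ hz0]
  nlinarith [sq_nonneg ((j : ℝ) - z)]

theorem mul_factorial_div_mul_div_pow_eq_choose_mul_pow {α j : ℕ} {p q : ℝ} (hq : q ≠ 0)
    (hj : 1 ≤ j) (hjα : j ≤ α) :
    α * p * q ^ (α - 1) *
        ((α - 1).factorial / (α - j).factorial * (1 / j.factorial) * (p / q) ^ (j - 1) : ℝ) =
      α.choose j * p ^ j * q ^ (α - j) := by
  have hαfac : (α.factorial : ℝ) = α * (α - 1).factorial := by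
    exact_mod_cast (Nat.mul_factorial_pred (by omega)).symm
  have hpj : p ^ j = p * p ^ (j - 1) := by rw [← pow_succ']; congr 1; omega
  have hqα : q ^ (α - 1) = q ^ (α - j) * q ^ (j - 1) := by rw [← pow_add]; congr 1; omega
  rw [Nat.cast_choose ℝ hjα, div_pow, hαfac, hpj, hqα]
  field_simp

theorem mul_h1_one {α : ℕ} {p z : ℝ} (hp : p ≠ 1) (hz : 0 ≤ z) :
    α * p * (1 - p) ^ (α - 1) * h1 α p z 1 = binomCallExp α p z := by
  rw [h1, binomCallExp, sum_range_add_one_eq_add_sum_Icc, mul_sum]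
  simp only [Nat.cast_zero, zero_sub, max_eq_right (neg_nonpos.2 hz), mul_zero, zero_add,
    Nat.sub_self, Nat.factorial_zero, Nat.cast_one]
  refine sum_congr rfl fun j hj => ?_
  rw [← mul_assoc, mul_factorial_div_mul_div_pow_eq_choose_mul_pow (sub_ne_zero.2 hp.symm)
    (mem_Icc.1 hj).1 (mem_Icc.1 hj).2]

theorem mul_h2_one {α : ℕ} {p z : ℝ} (hp : p ≠ 1) :
    α * p * (1 - p) ^ (α - 1) * h2 α p z 1 = (1 - (1 - p) ^ α) * binomCallExp α p z := by
  rw [h2, ← sum_choose_mul_pow_Icc, mul_sum, sum_mul]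
  simp only [Nat.sub_self, Nat.factorial_zero, Nat.cast_one]
  refine sum_congr rfl fun j hj => ?_
  rw [← mul_assoc, mul_factorial_div_mul_div_pow_eq_choose_mul_pow (sub_ne_zero.2 hp.symm)
    (mem_Icc.1 hj).1 (mem_Icc.1 hj).2]

theorem binomCallExp_nonneg (α : ℕ) {p : ℝ} (hp0 : 0 ≤ p) (hp1 : p ≤ 1) (z : ℝ) :
    0 ≤ binomCallExp α p z :=
  sum_nonneg fun j _ => mul_nonneg (mul_nonneg (by positivity) (pow_nonneg (sub_nonneg.2 hp1) _))
    (le_max_right _ _)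

theorem binomCallExp_le (α : ℕ) {p z : ℝ} (hp0 : 0 ≤ p) (hp1 : p ≤ 1) (hz : 1 ≤ z) :
    binomCallExp α p z ≤ α * (α - 1) * p ^ 2 / z := by
  rw [← sum_choose_mul_pow_mul_mul_sub_one, sum_div]
  refine sum_le_sum fun j _ => ?_
  rw [mul_div_assoc]
  exact mul_le_mul_of_nonneg_left (max_sub_zero_le_mul_sub_one_div hz j)
    (mul_nonneg (by positivity) (pow_nonneg (sub_nonneg.2 hp1) _))

/-- For `z > 1`,
`h₁(1) = ∑_{j=1}^{α} [(α-1)!/((α-j)! j!)]·(p/q)^{j-1}·(j-z)^+ ≤ (α-1) p q^{1-α} / z` and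
`h₂(1) = ∑_{j=1}^{α} [(α-1)!/((α-j)! j!)]·(p/q)^{j-1}·E[(B_{α,p}-z)^+] ≤ (α-1) p q^{1-α} / z`. -/
theorem h1_h2_one_le (α : ℕ) (hα : 0 < α) (p q : ℝ)
    (hq : q = 1 - p) (hp : 0 < p) (hp1 : p < 1) (z : ℝ) (hz : 1 < z) :
    h1 α p z 1 ≤ ((α : ℝ) - 1) * p * q ^ ((1 : ℤ) - (α : ℤ)) / z ∧
      h2 α p z 1 ≤ ((α : ℝ) - 1) * p * q ^ ((1 : ℤ) - (α : ℤ)) / z := by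
  subst hq
  have hA : 0 < (α : ℝ) * p * (1 - p) ^ (α - 1) := by
    have : 0 < 1 - p := sub_pos.2 hp1
    positivity
  have hbound : ((α : ℝ) - 1) * p * (1 - p) ^ ((1 : ℤ) - α) / z =
      α * (α - 1) * p ^ 2 / z / (α * p * (1 - p) ^ (α - 1)) := by
    rw [show (1 : ℤ) - α = -((α - 1 : ℕ) : ℤ) by omega, zpow_neg, zpow_natCast]
    field_simp
  have hE := binomCallExp_le α hp.le hp1.le hz.le
  rw [hbound, le_div_iff₀' hA, le_div_iff₀' hA, mul_h1_one hp1.ne (zero_le_one.trans hz.le),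
    mul_h2_one hp1.ne]
  refine ⟨hE, le_trans (mul_le_of_le_one_left ?_ ?_) hE⟩
  · exact binomCallExp_nonneg α hp.le hp1.le z
  · exact sub_le_self _ (pow_nonneg (sub_pos.2 hp1).le _)
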